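/- Let f : ℂ → ℂ be continuous on an open set U ⊆ ℂ and complex differentiable at every point of U \ X, where X ⊆ U is a compact countable set with exactly one accumulation point w, and w ∈ X. If △(z₁, z₂, z₃) is a triangle contained in U and w lies in the interior of △(z₁, z₂, z₃), then the integral of f along the closed polygonal path [z₁, z₂, z₃, z₁] equals 0. -/

import Mathlib

open Set

/-- The complex line integral of `f` along the segment from `a` to `b`:
`∫_{t ∈ [0,1]} f((1-t)·a + t·b) · (b - a) dt`. -/
noncomputable def segmentIntegral (f : ℂ → ℂ) (a b : ℂ) : ℂ :=
  ∫ t in (0:ℝ)..1, f ((1 - t) • a + t • b) * (b - a)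

/-- The integral of `f` along the closed polygonal path `[z₁, z₂, z₃, z₁]`. -/
noncomputable def triangleIntegral (f : ℂ → ℂ) (z₁ z₂ z₃ : ℂ) : ℂ :=
  segmentIntegral f z₁ z₂ + segmentIntegral f z₂ z₃ + segmentIntegral f z₃ z₁

/-- `w` is an accumulation point of `X`: every neighborhood of `w` contains a
point of `X` other than `w`. -/
def IsAccumulationPoint (w : ℂ) (X : Set ℂ) : Prop :=
  ∀ V ∈ nhds w, ∃ x, x ∈ V ∩ X ∧ x ≠ w

/-!
By the Cauchy integral formula for functions that are continuous and complex differentiable off a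
countable set, `f` is holomorphic on all of `U`, so it has a primitive on every disc in `U`.
Choose `ε > 0` such that the closed `ε`-disc around every point of the triangle lies in `U`.
Repeated midpoint subdivision halves perimeters and expresses the triangle integral as a sum of
integrals over triangles of perimeter `< ε` (interior edges are traversed once in each direction);
each of these lies in an `ε`-disc around one of its vertices, where the integral vanishes by the
fundamental theorem of calculus.
-/

open Metric AffineMap intervalIntegral

section SegmentIntegral
variable {f : ℂ → ℂ} {a b : ℂ}

theorem segmentIntegral_eq_integral_lineMap (f : ℂ → ℂ) (a b : ℂ) :
    segmentIntegral f a b = ∫ t in (0 : ℝ)..1, f (lineMap a b t) * (b - a) := by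
  simp only [segmentIntegral, lineMap_apply_module]

theorem segmentIntegral_lineMap_lineMap (f : ℂ → ℂ) (a b : ℂ) (s t : ℝ) :
    segmentIntegral f (lineMap a b s) (lineMap a b t) =
      ∫ u in s..t, f (lineMap a b u) * (b - a) := by
  have reparam : ∀ v : ℝ,
      f (lineMap (lineMap a b s) (lineMap a b t) v) * (lineMap a b t - lineMap a b s) =
        (t - s) • (f (lineMap a b (s + (t - s) * v)) * (b - a)) := by
    intro v
    simp only [lineMap_apply_module', Complex.real_smul]
    push_cast
    ring_nf
  simp_rw [segmentIntegral_eq_integral_lineMap, reparam, integral_smul]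
  rw [smul_integral_comp_add_mul (fun u ↦ f (lineMap a b u) * (b - a))]
  simp

theorem segmentIntegral_swap (f : ℂ → ℂ) (a b : ℂ) :
    segmentIntegral f b a = -segmentIntegral f a b := by
  have := segmentIntegral_lineMap_lineMap f a b 1 0
  rw [lineMap_apply_zero, lineMap_apply_one] at this
  rw [this, integral_symm, segmentIntegral_eq_integral_lineMap]

theorem ContinuousOn.intervalIntegrable_comp_lineMap (hf : ContinuousOn f (segment ℝ a b))
    {s t : ℝ} (hs : s ∈ Icc (0 : ℝ) 1) (ht : t ∈ Icc (0 : ℝ) 1) :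
    IntervalIntegrable (fun u : ℝ ↦ f (AffineMap.lineMap a b u) * (b - a))
      MeasureTheory.volume s t := by
  refine ContinuousOn.intervalIntegrable (ContinuousOn.mul ?_ continuousOn_const)
  refine hf.comp (lineMap_continuous (R := ℝ)).continuousOn fun u hu ↦ ?_
  exact lineMap_mem_segment ℝ a b (uIcc_subset_Icc hs ht hu)

theorem segmentIntegral_add_midpoint (hf : ContinuousOn f (segment ℝ a b)) :
    segmentIntegral f a (midpoint ℝ a b) + segmentIntegral f (midpoint ℝ a b) b =
      segmentIntegral f a b := by
  have h₀ := segmentIntegral_lineMap_lineMap f a b 0 (1 / 2)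
  have h₁ := segmentIntegral_lineMap_lineMap f a b (1 / 2) 1
  have h := segmentIntegral_lineMap_lineMap f a b 0 1
  simp only [lineMap_apply_zero, lineMap_apply_one, lineMap_one_half] at h₀ h₁ h
  rw [h₀, h₁, h, integral_add_adjacent_intervals] <;>
    apply hf.intervalIntegrable_comp_lineMap <;> norm_num

theorem segmentIntegral_eq_sub_of_hasDerivAt {F : ℂ → ℂ}
    (hF : ∀ z ∈ segment ℝ a b, HasDerivAt F (f z) z) (hf : ContinuousOn f (segment ℝ a b)) :
    segmentIntegral f a b = F b - F a := by
  have hderiv : ∀ t ∈ uIcc (0 : ℝ) 1,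
      HasDerivAt (F ∘ lineMap a b) (f (lineMap a b t) * (b - a)) t := fun t ht ↦
    (hF _ (lineMap_mem_segment ℝ a b (by rwa [uIcc_of_le zero_le_one] at ht))).comp t
      hasDerivAt_lineMap
  rw [segmentIntegral_eq_integral_lineMap, integral_eq_sub_of_hasDerivAt hderiv
    (hf.intervalIntegrable_comp_lineMap (by simp) (by simp))]
  simp

end SegmentIntegral

section Perimeter
variable {E : Type*}

def perimeter [Dist E] (a b c : E) : ℝ := dist a b + dist b c + dist c a

theorem perimeter_rotate [PseudoMetricSpace E] (a b c : E) :
    perimeter b c a = perimeter a b c := by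
  simp only [perimeter]; ring

variable [NormedAddCommGroup E] [NormedSpace ℝ E]

theorem dist_midpoint_midpoint_left (a b c : E) :
    dist (midpoint ℝ a b) (midpoint ℝ a c) = dist b c / 2 := by
  rw [dist_eq_norm, dist_eq_norm, midpoint_eq_smul_add, midpoint_eq_smul_add, ← smul_sub,
    add_sub_add_left_eq_sub, norm_smul]
  simp [div_eq_inv_mul]

theorem perimeter_corner (a b c : E) :
    perimeter a (midpoint ℝ a b) (midpoint ℝ a c) = perimeter a b c / 2 := by
  have h₁ : dist a (midpoint ℝ a b) = dist a b / 2 := by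
    simpa using dist_midpoint_midpoint_left a a b
  have h₂ : dist (midpoint ℝ a c) a = dist c a / 2 := by
    simpa [dist_comm] using dist_midpoint_midpoint_left a a c
  rw [perimeter, perimeter, h₁, dist_midpoint_midpoint_left, h₂]
  ring

theorem perimeter_medial (a b c : E) :
    perimeter (midpoint ℝ a b) (midpoint ℝ b c) (midpoint ℝ c a) = perimeter a b c / 2 := by
  have h₁ : dist (midpoint ℝ a b) (midpoint ℝ b c) = dist c a / 2 := by
    rw [midpoint_comm a b, dist_midpoint_midpoint_left, dist_comm]
  have h₂ : dist (midpoint ℝ b c) (midpoint ℝ c a) = dist a b / 2 := by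
    rw [midpoint_comm b c, dist_midpoint_midpoint_left, dist_comm]
  have h₃ : dist (midpoint ℝ c a) (midpoint ℝ a b) = dist b c / 2 := by
    rw [midpoint_comm c a, dist_midpoint_midpoint_left, dist_comm]
  rw [perimeter, perimeter, h₁, h₂, h₃]
  ring

end Perimeter

section TriangleIntegral
variable {f : ℂ → ℂ} {a b c : ℂ}

theorem triangleIntegral_eq_zero_of_hasDerivAt {s : Set ℂ} {F : ℂ → ℂ} (hs : Convex ℝ s)
    (ha : a ∈ s) (hb : b ∈ s) (hc : c ∈ s) (hF : ∀ z ∈ s, HasDerivAt F (f z) z)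
    (hf : ContinuousOn f s) : triangleIntegral f a b c = 0 := by
  have side : ∀ {x y}, x ∈ s → y ∈ s → segmentIntegral f x y = F y - F x := fun hx hy ↦
    segmentIntegral_eq_sub_of_hasDerivAt (fun z hz ↦ hF z (hs.segment_subset hx hy hz))
      (hf.mono (hs.segment_subset hx hy))
  rw [triangleIntegral, side ha hb, side hb hc, side hc ha]
  ring

theorem triangleIntegral_eq_sum_subdivision (hab : ContinuousOn f (segment ℝ a b))
    (hbc : ContinuousOn f (segment ℝ b c)) (hca : ContinuousOn f (segment ℝ c a)) :
    triangleIntegral f a b c =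
      triangleIntegral f a (midpoint ℝ a b) (midpoint ℝ c a) +
        triangleIntegral f (midpoint ℝ a b) b (midpoint ℝ b c) +
        triangleIntegral f (midpoint ℝ c a) (midpoint ℝ b c) c +
        triangleIntegral f (midpoint ℝ a b) (midpoint ℝ b c) (midpoint ℝ c a) := by
  simp only [triangleIntegral, ← segmentIntegral_add_midpoint hab,
    ← segmentIntegral_add_midpoint hbc, ← segmentIntegral_add_midpoint hca,
    segmentIntegral_swap f (midpoint ℝ b c) (midpoint ℝ a b),
    segmentIntegral_swap f (midpoint ℝ c a) (midpoint ℝ b c),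
    segmentIntegral_swap f (midpoint ℝ a b) (midpoint ℝ c a)]
  ring

theorem triangleIntegral_eq_zero_of_forall_perimeter_lt {K : Set ℂ} (hK : Convex ℝ K)
    (hf : ContinuousOn f K) {δ : ℝ} (hδ : 0 < δ)
    (hsmall : ∀ a ∈ K, ∀ b ∈ K, ∀ c ∈ K, perimeter a b c < δ → triangleIntegral f a b c = 0)
    (ha : a ∈ K) (hb : b ∈ K) (hc : c ∈ K) : triangleIntegral f a b c = 0 := by
  suffices H : ∀ n : ℕ, ∀ a ∈ K, ∀ b ∈ K, ∀ c ∈ K,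
      perimeter a b c < δ * 2 ^ n → triangleIntegral f a b c = 0 by
    obtain ⟨n, hn⟩ := pow_unbounded_of_one_lt (perimeter a b c / δ) one_lt_two
    exact H n a ha b hb c hc (by rwa [div_lt_iff₀' hδ] at hn)
  intro n
  induction n with
  | zero => simpa using hsmall
  | succ n ih =>
    intro a ha b hb c hc hlt
    have hsub : perimeter a b c / 2 < δ * 2 ^ n := by rw [pow_succ] at hlt; linarith
    have hab := hK.midpoint_mem ha hb
    have hbc := hK.midpoint_mem hb hc
    have hca := hK.midpoint_mem hc ha
    have hseg : ∀ {x y}, x ∈ K → y ∈ K → ContinuousOn f (segment ℝ x y) := fun hx hy ↦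
      hf.mono (hK.segment_subset hx hy)
    rw [triangleIntegral_eq_sum_subdivision (hseg ha hb) (hseg hb hc) (hseg hc ha),
      ih _ ha _ hab _ hca (by rwa [← midpoint_comm a c, perimeter_corner]),
      ih _ hab _ hb _ hbc (by rwa [← perimeter_rotate, midpoint_comm a, perimeter_corner,
        perimeter_rotate]),
      ih _ hca _ hbc _ hc (by rwa [perimeter_rotate, midpoint_comm b, perimeter_corner,
        ← perimeter_rotate]),
      ih _ hab _ hbc _ hca (by rwa [perimeter_medial])]
    ring

end TriangleIntegral

theorem ContinuousOn.differentiableOn_of_differentiableAt_off_countable {f : ℂ → ℂ}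
    {U X : Set ℂ} (hf : ContinuousOn f U) (hU : IsOpen U) (hX : X.Countable)
    (hd : ∀ z ∈ U \ X, DifferentiableAt ℂ f z) : DifferentiableOn ℂ f U := by
  intro z hz
  obtain ⟨R, hR, hRU⟩ : ∃ R > 0, closedBall z R ⊆ U :=
    nhds_basis_closedBall.mem_iff.mp (hU.mem_nhds hz)
  lift R to NNReal using hR.le
  have hp := Complex.hasFPowerSeriesOnBall_of_differentiable_off_countable hX (hf.mono hRU)
    (fun y hy ↦ hd y ⟨hRU (ball_subset_closedBall hy.1), hy.2⟩) (by exact_mod_cast hR)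
  exact hp.analyticAt.differentiableAt.differentiableWithinAt

theorem triangleIntegral_eq_zero_of_differentiableOn {f : ℂ → ℂ} {U : Set ℂ} {a b c : ℂ}
    (hU : IsOpen U) (hf : DifferentiableOn ℂ f U) (hT : convexHull ℝ {a, b, c} ⊆ U) :
    triangleIntegral f a b c = 0 := by
  have hK : IsCompact (convexHull ℝ {a, b, c}) := (toFinite _).isCompact_convexHull ℝ
  obtain ⟨ε, hε, hεU⟩ := hK.exists_cthickening_subset_open hU hT
  refine triangleIntegral_eq_zero_of_forall_perimeter_lt (convex_convexHull ℝ _)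
    (hf.continuousOn.mono hT) hε (fun x hx y _ z _ hxyz ↦ ?_) (subset_convexHull ℝ _ (by simp))
    (subset_convexHull ℝ _ (by simp)) (subset_convexHull ℝ _ (by simp))
  have hball : ball x ε ⊆ U :=
    ball_subset_closedBall.trans ((closedBall_subset_cthickening hx ε).trans hεU)
  obtain ⟨F, hF⟩ := (hf.mono hball).isExactOn_ball
  unfold perimeter at hxyz
  have hy : y ∈ ball x ε := by
    rw [mem_ball, dist_comm]
    linarith [dist_nonneg (x := y) (y := z), dist_nonneg (x := z) (y := x)]
  have hz : z ∈ ball x ε := by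
    rw [mem_ball]
    linarith [dist_nonneg (x := x) (y := y), dist_nonneg (x := y) (y := z)]
  exact triangleIntegral_eq_zero_of_hasDerivAt (convex_ball x ε) (mem_ball_self hε) hy hz hF
    (hf.continuousOn.mono hball)

theorem stmt_7_general (f : ℂ → ℂ) (U : Set ℂ) (hU : IsOpen U)
    (hf : ContinuousOn f U) (X : Set ℂ)
    (hXcount : X.Countable)
    (z₁ z₂ z₃ : ℂ) (htri : convexHull ℝ {z₁, z₂, z₃} ⊆ U)
    (hd : ∀ z ∈ U \ X, DifferentiableAt ℂ f z) :
    triangleIntegral f z₁ z₂ z₃ = 0 :=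
  triangleIntegral_eq_zero_of_differentiableOn hU
    (hf.differentiableOn_of_differentiableAt_off_countable hU hXcount hd) htri

theorem stmt_7 (f : ℂ → ℂ) (U : Set ℂ) (hU : IsOpen U)
    (hf : ContinuousOn f U) (X : Set ℂ) (hXU : X ⊆ U)
    (hXcomp : IsCompact X) (hXcount : X.Countable)
    (w : ℂ) (hacc : {p | IsAccumulationPoint p X} = {w}) (hwX : w ∈ X)
    (z₁ z₂ z₃ : ℂ) (htri : convexHull ℝ {z₁, z₂, z₃} ⊆ U)
    (hd : ∀ z ∈ U \ X, DifferentiableAt ℂ f z)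
    (hint : w ∈ interior (convexHull ℝ {z₁, z₂, z₃})) :
    triangleIntegral f z₁ z₂ z₃ = 0 :=
  stmt_7_general f U hU hf X hXcount z₁ z₂ z₃ htri hd
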